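/- arXiv:1209.5886 — 10 statements merged into one kernel-verified Lean document; each statement's English description precedes it below -/
import Mathlib

section
/- Let n be a natural number and let H : Fin n → Fin n → Fin n → ℝ be an alternating 3-tensor. Assume: (1) for all indices i, j and all a ≠ b one has H i j a * H i j b = 0; (2) there exist a real number c ≥ 0 and a natural number m such that for every index k the set {(i,j) : i < j and H i j k ≠ 0} has exactly m elements, and (H i j k)² = c whenever H i j k ≠ 0. Then H is of Einstein type; more precisely S H a b = 2·m·c·(if a = b then 1 else 0) for all a, b. -/
/-- An alternating 3-tensor on `ℝ^n`: it changes sign under the interchange of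
any two (adjacent, hence any two) of its arguments. -/
def IsAlt3 {n : ℕ} (H : Fin n → Fin n → Fin n → ℝ) : Prop :=
  (∀ i j k, H j i k = - H i j k) ∧ (∀ i j k, H i k j = - H i j k)

/-- The difference tensor `S H a b = ∑_{i,j} H i a j * H i b j`. -/
def Sdiff {n : ℕ} (H : Fin n → Fin n → Fin n → ℝ) (a b : Fin n) : ℝ :=
  ∑ i, ∑ j, H i a j * H i b j

/-- If an alternating 3-tensor `H` satisfies: (1) `H i j a * H i j b = 0` for `a ≠ b`;
(2) for some `c ≥ 0` and `m : ℕ`, every index `k` occurs in exactly `m` (unordered)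
nonzero components, all of which have square `c`; then `H` is of Einstein type with
`S H = 2·m·c·δ`. -/
theorem einstein_type_criterion {n : ℕ} (H : Fin n → Fin n → Fin n → ℝ)
    (halt : IsAlt3 H)
    (h1 : ∀ i j a b : Fin n, a ≠ b → H i j a * H i j b = 0)
    (c : ℝ) (hc : 0 ≤ c) (m : ℕ)
    (hm : ∀ k : Fin n, {p : Fin n × Fin n | p.1 < p.2 ∧ H p.1 p.2 k ≠ 0}.ncard = m)
    (hsq : ∀ i j k : Fin n, H i j k ≠ 0 → (H i j k) ^ 2 = c) :
    ∀ a b : Fin n, Sdiff H a b = 2 * (m : ℝ) * c * (if a = b then 1 else 0) := by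
  obtain ⟨hA1, hA2⟩ := halt
  have hzero : ∀ i k, H i i k = 0 := fun i k => by have := hA1 i i k; linarith
  intro a b
  rcases eq_or_ne a b with hab | hab
  · subst hab
    simp only [if_pos rfl, mul_one]
    have step1 : Sdiff H a a = ∑ p : Fin n × Fin n, (H p.1 p.2 a) ^ 2 := by
      rw [Sdiff, Fintype.sum_prod_type]
      refine Finset.sum_congr rfl fun i _ => Finset.sum_congr rfl fun j _ => ?_
      have h : H i a j = - H i j a := hA2 i j a
      show H i a j * H i a j = H i j a ^ 2
      rw [h]; ring
    set F := Finset.univ.filter (fun p : Fin n × Fin n => H p.1 p.2 a ≠ 0) with hF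
    have hFmem : ∀ p : Fin n × Fin n, p ∈ F ↔ H p.1 p.2 a ≠ 0 := by
      intro p; simp [hF]
    have step2 : ∑ p : Fin n × Fin n, (H p.1 p.2 a) ^ 2 = ∑ p ∈ F, (H p.1 p.2 a) ^ 2 := by
      symm
      apply Finset.sum_filter_of_ne
      intro p _ hp
      intro h0
      exact hp (by rw [h0]; ring)
    have step3 : ∑ p ∈ F, (H p.1 p.2 a) ^ 2 = F.card * c := by
      rw [Finset.sum_congr rfl (fun p hp => hsq p.1 p.2 a ((hFmem p).mp hp)),
        Finset.sum_const, nsmul_eq_mul]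
    -- cardinality
    set Flt := F.filter (fun p : Fin n × Fin n => p.1 < p.2) with hFlt
    set Fgt := F.filter (fun p : Fin n × Fin n => ¬ p.1 < p.2) with hFgt
    have hne : ∀ p : Fin n × Fin n, p ∈ F → p.1 ≠ p.2 := by
      intro p hp heq
      exact (hFmem p).mp hp (by rw [← heq, hzero])
    have hcardsum : Flt.card + Fgt.card = F.card :=
      Finset.card_filter_add_card_filter_not _
    have hlt : Flt.card = m := by
      have hset : {p : Fin n × Fin n | p.1 < p.2 ∧ H p.1 p.2 a ≠ 0} = ↑Flt := by
        ext p
        simp only [hFlt, hF, Finset.coe_filter, Finset.mem_univ, true_and,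
          Set.mem_setOf_eq, Finset.mem_filter]
        tauto
      have := hm a
      rwa [hset, Set.ncard_coe_finset] at this
    have hgt : Fgt.card = Flt.card := by
      apply Finset.card_bij' (fun p _ => Prod.swap p) (fun p _ => Prod.swap p)
      · intro p hp
        rw [hFgt, Finset.mem_filter] at hp
        obtain ⟨hpF, hnlt⟩ := hp
        have hne' := hne p hpF
        have hlt' : p.2 < p.1 := lt_of_le_of_ne (le_of_not_gt hnlt) (Ne.symm hne')
        rw [hFlt, Finset.mem_filter]
        refine ⟨?_, hlt'⟩
        rw [hFmem]
        have := hA1 p.1 p.2 a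
        simp only [Prod.fst_swap, Prod.snd_swap]
        rw [this]
        simpa using (hFmem p).mp hpF
      · intro p hp
        rw [hFlt, Finset.mem_filter] at hp
        obtain ⟨hpF, hlt'⟩ := hp
        rw [hFgt, Finset.mem_filter]
        constructor
        · rw [hFmem]
          have := hA1 p.1 p.2 a
          simp only [Prod.fst_swap, Prod.snd_swap]
          rw [this]
          simpa using (hFmem p).mp hpF
        · simp only [Prod.fst_swap, Prod.snd_swap]
          exact not_lt_of_gt hlt'
      · intro p _; simp
      · intro p _; simp
    have hcard : (F.card : ℝ) = 2 * m := by
      have : F.card = 2 * m := by omega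
      exact_mod_cast congrArg (Nat.cast : ℕ → ℝ) this
    rw [step1, step2, step3, hcard]
    simp
  · simp only [if_neg hab, mul_zero]
    rw [Sdiff]
    apply Finset.sum_eq_zero
    intro i _
    apply Finset.sum_eq_zero
    intro j _
    have e1 : H i a j = - H i j a := hA2 i j a
    have e2 : H i b j = - H i j b := hA2 i j b
    have h0 := h1 i j a b hab
    rw [e1, e2]
    linarith [h0]
end

section
/- Let H be the alternating 3-tensor on ℝ³ determined by H 0 1 2 = 1 (all components not obtained from this one by permutations of the arguments being zero). Then S H a b = 2·(if a = b then 1 else 0) for all a, b; in particular H is of Einstein type (this is Schouten's normal form of type I in dimension 3). -/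
/-- The elementary alternating 3-tensor `e_p ∧ e_q ∧ e_r` (with value `1` on `(p,q,r)`,
its sign on permutations thereof, and `0` elsewhere). -/
def tri {n : ℕ} (p q r : Fin n) : Fin n → Fin n → Fin n → ℝ := fun i j k =>
  if (i, j, k) = (p, q, r) ∨ (i, j, k) = (q, r, p) ∨ (i, j, k) = (r, p, q) then 1
  else if (i, j, k) = (q, p, r) ∨ (i, j, k) = (p, r, q) ∨ (i, j, k) = (r, q, p) then -1
  else 0

/-- Schouten's normal form of type I in dimension 3, `H = e₁₂₃`, satisfies
`S H = 2·δ`; in particular it is of Einstein type. -/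
theorem schouten_typeI_einstein :
    (∀ a b : Fin 3, Sdiff (tri 0 1 2) a b = 2 * (if a = b then 1 else 0)) ∧
    (∃ lam : ℝ, ∀ a b : Fin 3,
      Sdiff (tri 0 1 2) a b = lam * (if a = b then 1 else 0)) := by
  have h : ∀ a b : Fin 3, Sdiff (tri 0 1 2) a b = 2 * (if a = b then 1 else 0) := by
    intro a b
    fin_cases a <;> fin_cases b <;>
      simp [Sdiff, tri, Fin.sum_univ_three, Prod.ext_iff] <;> norm_num
  exact ⟨h, 2, h⟩
end

section
/- Let H be the alternating 3-tensor on ℝ⁶ determined by H 0 1 2 = 1 and H 3 4 5 = 1 (all components not obtained from these by permutations of the arguments being zero; this is Schouten's normal form e₁₂₃ + e₄₅₆ of type IV in dimension 6). Then S H a b = 2·(if a = b then 1 else 0) for all a, b; in particular H is of Einstein type. -/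
set_option maxHeartbeats 1600000 in
/-- Schouten's normal form of type IV in dimension 6, `H = e₁₂₃ + e₄₅₆`, satisfies
`S H = 2·δ`; in particular it is of Einstein type. -/
theorem schouten_typeIV_einstein :
    (∀ a b : Fin 6,
      Sdiff (fun i j k => tri 0 1 2 i j k + tri 3 4 5 i j k) a b
        = 2 * (if a = b then 1 else 0)) ∧
    (∃ lam : ℝ, ∀ a b : Fin 6,
      Sdiff (fun i j k => tri 0 1 2 i j k + tri 3 4 5 i j k) a b
        = lam * (if a = b then 1 else 0)) := by
  have main : ∀ a b : Fin 6,
      Sdiff (fun i j k => tri 0 1 2 i j k + tri 3 4 5 i j k) a b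
        = 2 * (if a = b then 1 else 0) := by
    intro a b
    fin_cases a <;> fin_cases b <;>
      (simp only [Sdiff, Fin.sum_univ_six, tri]
       norm_num (config := { decide := true }) [Prod.ext_iff])
  exact ⟨main, 2, main⟩
end

section
/- Let H be the alternating 3-tensor on ℝ⁶ determined by H 0 2 4 = H 0 3 5 = H 1 4 5 = H 1 2 3 = 1 (all components not obtained from these by permutations of the arguments being zero; this is Schouten's generic normal form e₁₃₅ + e₁₄₆ + e₂₅₆ + e₂₃₄ of type V in dimension 6). Then S H a b = 4·(if a = b then 1 else 0) for all a, b; in particular H is of Einstein type. -/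
/-- Schouten's generic normal form of type V in dimension 6,
`H = e₁₃₅ + e₁₄₆ + e₂₅₆ + e₂₃₄` (indices shifted to start at 0), satisfies
`S H = 4·δ`; in particular it is of Einstein type. -/
theorem schouten_typeV_einstein :
    (∀ a b : Fin 6,
      Sdiff (fun i j k =>
        tri 0 2 4 i j k + tri 0 3 5 i j k + tri 1 4 5 i j k + tri 1 2 3 i j k) a b
        = 4 * (if a = b then 1 else 0)) ∧
    (∃ lam : ℝ, ∀ a b : Fin 6,
      Sdiff (fun i j k =>
        tri 0 2 4 i j k + tri 0 3 5 i j k + tri 1 4 5 i j k + tri 1 2 3 i j k) a b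
        = lam * (if a = b then 1 else 0)) := by
  have key : ∀ a b : Fin 6,
      Sdiff (fun i j k =>
        tri 0 2 4 i j k + tri 0 3 5 i j k + tri 1 4 5 i j k + tri 1 2 3 i j k) a b
        = 4 * (if a = b then 1 else 0) := by
    intro a b
    fin_cases a <;> fin_cases b <;>
      simp (config := { decide := true }) [Sdiff, tri, Fin.sum_univ_six] <;> norm_num
  exact ⟨key, 4, key⟩
end

section
/- There is no nonzero alternating 3-tensor of Einstein type in dimension 4: if H : Fin 4 → Fin 4 → Fin 4 → ℝ is alternating and there exists λ : ℝ with S H a b = λ · (if a = b then 1 else 0) for all a, b, then H = 0 (and λ = 0). Consequently a 4-dimensional Riemannian Einstein manifold is never Einstein with skew torsion for a nonzero torsion 3-form. -/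
/-- There is no nonzero alternating 3-tensor of Einstein type in dimension 4. -/
theorem no_einstein_type_dim4 (H : Fin 4 → Fin 4 → Fin 4 → ℝ) (halt : IsAlt3 H)
    (lam : ℝ) (hE : ∀ a b : Fin 4, Sdiff H a b = lam * (if a = b then 1 else 0)) :
    H = 0 ∧ lam = 0 := by
  obtain ⟨h1, h2⟩ := halt
  have hz1 : ∀ i k : Fin 4, H i i k = 0 := fun i k => by have := h1 i i k; linarith
  have hz2 : ∀ i j : Fin 4, H i j j = 0 := fun i j => by have := h2 i j j; linarith
  have hz3 : ∀ i j : Fin 4, H i j i = 0 := fun i j => by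
    have := h2 i i j; have := hz1 i j; linarith
  have key : ∀ i j k : Fin 4,
      H i k j = -H i j k ∧ H j i k = -H i j k ∧ H j k i = H i j k ∧
      H k i j = H i j k ∧ H k j i = -H i j k := by
    intro i j k
    have e1 := h2 i j k
    have e2 := h1 i j k
    have e3 := h2 j i k
    have e4 := h1 j k i
    have e5 := h2 k j i
    exact ⟨e1, e2, by linarith, by linarith, by linarith⟩
  obtain ⟨ka1, ka2, ka3, ka4, ka5⟩ := key 0 1 2
  obtain ⟨kb1, kb2, kb3, kb4, kb5⟩ := key 0 1 3
  obtain ⟨kc1, kc2, kc3, kc4, kc5⟩ := key 0 2 3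
  obtain ⟨kd1, kd2, kd3, kd4, kd5⟩ := key 1 2 3
  have e00 := hE 0 0
  have e11 := hE 1 1
  have e22 := hE 2 2
  have e33 := hE 3 3
  have e01 := hE 0 1
  have e02 := hE 0 2
  have e03 := hE 0 3
  have e12 := hE 1 2
  have e13 := hE 1 3
  have e23 := hE 2 3
  simp only [Sdiff, Fin.sum_univ_four, hz1, hz2, hz3, ka1, ka2, ka3, ka4, ka5,
    kb1, kb2, kb3, kb4, kb5, kc1, kc2, kc3, kc4, kc5, kd1, kd2, kd3, kd4, kd5,
    if_true, if_false, mul_one, mul_zero, zero_mul, mul_neg, neg_mul, neg_neg,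
    zero_add, add_zero, neg_zero, Fin.reduceEq, reduceIte] at e00 e11 e22 e33 e01 e02 e03 e12 e13 e23
  set a := H 0 1 2 with ha
  set b := H 0 1 3 with hb
  set c := H 0 2 3 with hc
  set d := H 1 2 3 with hd
  have had : a * d = 0 := by linarith
  have hbd : b * d = 0 := by linarith
  have hcd : c * d = 0 := by linarith
  have haad : a * a = d * d := by linarith
  have hbbd : b * b = d * d := by linarith
  have hccd : c * c = d * d := by linarith
  have ha4 : a ^ 4 = (a * d) * (a * d) + (a * a) * (a * a - d * d) := by ring
  have hb4 : b ^ 4 = (b * d) * (b * d) + (b * b) * (b * b - d * d) := by ring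
  have hc4 : c ^ 4 = (c * d) * (c * d) + (c * c) * (c * c - d * d) := by ring
  rw [had, haad] at ha4
  rw [hbd, hbbd] at hb4
  rw [hcd, hccd] at hc4
  simp only [mul_zero, zero_mul, sub_self, add_zero, zero_add] at ha4 hb4 hc4
  have ha0 : a = 0 := by
    have := pow_eq_zero_iff (n := 4) (by norm_num) |>.mp ha4; exact this
  have hb0 : b = 0 := by
    have := pow_eq_zero_iff (n := 4) (by norm_num) |>.mp hb4; exact this
  have hc0 : c = 0 := by
    have := pow_eq_zero_iff (n := 4) (by norm_num) |>.mp hc4; exact this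
  have hd0 : d = 0 := by
    have : d * d = 0 := by rw [← haad, ha0]; ring
    exact mul_self_eq_zero.mp this
  have hlam : lam = 0 := by rw [ha0, hb0, hc0] at e00; linarith
  refine ⟨?_, hlam⟩
  funext i j k
  fin_cases i <;> fin_cases j <;> fin_cases k <;>
    simp [hz1, hz2, hz3, ka1, ka2, ka3, ka4, ka5, kb1, kb2, kb3, kb4, kb5,
      kc1, kc2, kc3, kc4, kc5, kd1, kd2, kd3, kd4, kd5, ← ha, ← hb, ← hc, ← hd,
      ha0, hb0, hc0, hd0]
end

section
/- Let H be the alternating 3-tensor on ℝ⁷ determined by H 0 1 2 = H 0 3 4 = H 0 5 6 = H 1 3 5 = 1 (all components not obtained from these by permutations of the arguments being zero; this is Westwick's generic normal form e₁(e₂₃+e₄₅+e₆₇) + e₂₄₆ of type IX in dimension 7). Then H is not of Einstein type; indeed S H 0 0 = 6 while S H 3 3 = 4. -/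
/-- Westwick's generic normal form of type IX in dimension 7,
`H = e₁(e₂₃+e₄₅+e₆₇) + e₂₄₆` (indices shifted to start at 0),
is not of Einstein type: `S H 0 0 = 6` while `S H 3 3 = 4`. -/
theorem westwick_typeIX_not_einstein :
    (¬ ∃ lam : ℝ, ∀ a b : Fin 7,
      Sdiff (fun i j k =>
        tri 0 1 2 i j k + tri 0 3 4 i j k + tri 0 5 6 i j k + tri 1 3 5 i j k) a b
        = lam * (if a = b then 1 else 0)) ∧
    Sdiff (fun i j k : Fin 7 =>
      tri 0 1 2 i j k + tri 0 3 4 i j k + tri 0 5 6 i j k + tri 1 3 5 i j k) 0 0 = 6 ∧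
    Sdiff (fun i j k : Fin 7 =>
      tri 0 1 2 i j k + tri 0 3 4 i j k + tri 0 5 6 i j k + tri 1 3 5 i j k) 3 3 = 4 := by
  have h0 : Sdiff (fun i j k : Fin 7 =>
      tri 0 1 2 i j k + tri 0 3 4 i j k + tri 0 5 6 i j k + tri 1 3 5 i j k) 0 0 = 6 := by
    simp [Sdiff, tri, Fin.sum_univ_seven]
    norm_num
  have h3 : Sdiff (fun i j k : Fin 7 =>
      tri 0 1 2 i j k + tri 0 3 4 i j k + tri 0 5 6 i j k + tri 1 3 5 i j k) 3 3 = 4 := by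
    simp [Sdiff, tri, Fin.sum_univ_seven]
    norm_num
  refine ⟨?_, h0, h3⟩
  rintro ⟨lam, hl⟩
  have e0 := hl 0 0
  have e3 := hl 3 3
  rw [h0] at e0
  rw [h3] at e3
  simp at e0 e3
  linarith
end

section
/- Let H be the alternating 3-tensor on ℝ⁷ determined by H 0 3 4 = H 0 5 6 = H 1 3 5 = H 2 3 6 = H 2 4 5 = 1 and H 1 4 6 = −1 (all components not obtained from these by permutations of the arguments being zero; this is the normal form e₁(e₄₅+e₆₇) + e₂(e₄₆−e₅₇) + e₃(e₄₇+e₅₆) of type XII in dimension 7). Then H is not of Einstein type; indeed S H 0 0 = 4 while S H 3 3 = 6. -/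
private lemma S00 : Sdiff (fun i j k : Fin 7 =>
      tri 0 3 4 i j k + tri 0 5 6 i j k + tri 1 3 5 i j k + tri 2 3 6 i j k
        + tri 2 4 5 i j k - tri 1 4 6 i j k) 0 0 = 4 := by
  simp [Sdiff, tri, Fin.sum_univ_seven, Prod.ext_iff]
  norm_num

private lemma S33 : Sdiff (fun i j k : Fin 7 =>
      tri 0 3 4 i j k + tri 0 5 6 i j k + tri 1 3 5 i j k + tri 2 3 6 i j k
        + tri 2 4 5 i j k - tri 1 4 6 i j k) 3 3 = 6 := by
  simp [Sdiff, tri, Fin.sum_univ_seven, Prod.ext_iff]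
  norm_num

/-- The normal form of type XII in dimension 7,
`H = e₁(e₄₅+e₆₇) + e₂(e₄₆−e₅₇) + e₃(e₄₇+e₅₆)` (indices shifted to start at 0),
is not of Einstein type: `S H 0 0 = 4` while `S H 3 3 = 6`. -/
theorem typeXII_not_einstein :
    (¬ ∃ lam : ℝ, ∀ a b : Fin 7,
      Sdiff (fun i j k =>
        tri 0 3 4 i j k + tri 0 5 6 i j k + tri 1 3 5 i j k + tri 2 3 6 i j k
          + tri 2 4 5 i j k - tri 1 4 6 i j k) a b
        = lam * (if a = b then 1 else 0)) ∧
    Sdiff (fun i j k : Fin 7 =>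
      tri 0 3 4 i j k + tri 0 5 6 i j k + tri 1 3 5 i j k + tri 2 3 6 i j k
        + tri 2 4 5 i j k - tri 1 4 6 i j k) 0 0 = 4 ∧
    Sdiff (fun i j k : Fin 7 =>
      tri 0 3 4 i j k + tri 0 5 6 i j k + tri 1 3 5 i j k + tri 2 3 6 i j k
        + tri 2 4 5 i j k - tri 1 4 6 i j k) 3 3 = 6 := by
  refine ⟨?_, S00, S33⟩
  rintro ⟨lam, h⟩
  have h0 := h 0 0
  have h3 := h 3 3
  rw [S00] at h0
  rw [S33] at h3
  simp at h0 h3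
  linarith
end

section
/- Let H be the alternating 3-tensor on ℝ⁷ determined by H 0 1 2 = H 0 3 4 = H 0 5 6 = 1 (all components not obtained from these by permutations of the arguments being zero; this is the normal form e₁(e₂₃+e₄₅+e₆₇) of type VIII in dimension 7). Then H is not of Einstein type; indeed S H 0 0 = 6 while S H 1 1 = 2. -/
/-- The normal form of type VIII in dimension 7, `H = e₁(e₂₃+e₄₅+e₆₇)`
(indices shifted to start at 0), is not of Einstein type:
`S H 0 0 = 6` while `S H 1 1 = 2`. -/
theorem typeVIII_not_einstein :
    (¬ ∃ lam : ℝ, ∀ a b : Fin 7,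
      Sdiff (fun i j k =>
        tri 0 1 2 i j k + tri 0 3 4 i j k + tri 0 5 6 i j k) a b
        = lam * (if a = b then 1 else 0)) ∧
    Sdiff (fun i j k : Fin 7 =>
      tri 0 1 2 i j k + tri 0 3 4 i j k + tri 0 5 6 i j k) 0 0 = 6 ∧
    Sdiff (fun i j k : Fin 7 =>
      tri 0 1 2 i j k + tri 0 3 4 i j k + tri 0 5 6 i j k) 1 1 = 2 := by
  have h00 : Sdiff (fun i j k : Fin 7 =>
      tri 0 1 2 i j k + tri 0 3 4 i j k + tri 0 5 6 i j k) 0 0 = 6 := by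
    simp [Sdiff, tri, Fin.sum_univ_seven]
    norm_num
  have h11 : Sdiff (fun i j k : Fin 7 =>
      tri 0 1 2 i j k + tri 0 3 4 i j k + tri 0 5 6 i j k) 1 1 = 2 := by
    simp [Sdiff, tri, Fin.sum_univ_seven]
    norm_num
  refine ⟨?_, h00, h11⟩
  rintro ⟨lam, hl⟩
  have e0 := hl 0 0
  have e1 := hl 1 1
  rw [h00] at e0
  rw [h11] at e1
  simp at e0 e1
  linarith
end

section
/- Let L be a finite-dimensional Lie algebra over ℝ and t : ℝ. With R_t(X,Y)Z := t²·⁅X,⁅Y,Z⁆⁆ − t²·⁅Y,⁅X,Z⁆⁆ − t·⁅⁅X,Y⁆,Z⁆, define the Ricci form Ric_t(X,Y) := trace of the linear map Z ↦ R_t(Z,X)Y. Then for all X, Y in L, Ric_t(X,Y) = 4(t − t²)·Ric_{1/2}(X,Y). Hence ∇^t is Ricci-flat for t = 0, 1, and for t ≠ 0, 1 the Ricci form Ric_t is proportional to the Riemannian Ricci form Ric_{1/2} with positive factor 4(t − t²) when 0 < t < 1. -/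
/-- The linear map `Z ↦ R_t(Z,X)Y`, where
`R_t(X,Y)Z = t²⁅X,⁅Y,Z⁆⁆ − t²⁅Y,⁅X,Z⁆⁆ − t⁅⁅X,Y⁆,Z⁆` is the curvature of the
bi-invariant connection `∇^t_X Y = t⁅X,Y⁆`. -/
def RtMap (L : Type*) [LieRing L] [LieAlgebra ℝ L] (t : ℝ) (X Y : L) :
    L →ₗ[ℝ] L where
  toFun Z := t ^ 2 • ⁅Z, ⁅X, Y⁆⁆ - t ^ 2 • ⁅X, ⁅Z, Y⁆⁆ - t • ⁅⁅Z, X⁆, Y⁆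
  map_add' Z W := by
    simp only [add_lie, lie_add, smul_add]
    abel
  map_smul' c Z := by
    simp only [smul_lie, lie_smul, RingHom.id_apply]
    module

/-- The Ricci form `Ric_t(X,Y) = tr(Z ↦ R_t(Z,X)Y)` of the connection `∇^t`. -/
noncomputable def RicT (L : Type*) [LieRing L] [LieAlgebra ℝ L] (t : ℝ) (X Y : L) : ℝ :=
  LinearMap.trace ℝ L (RtMap L t X Y)

lemma RtMap_eq (L : Type*) [LieRing L] [LieAlgebra ℝ L] (t : ℝ) (X Y : L) :
    RtMap L t X Y = -(t ^ 2) • (LieAlgebra.ad ℝ L ⁅X, Y⁆)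
      + t ^ 2 • (LieAlgebra.ad ℝ L X ∘ₗ LieAlgebra.ad ℝ L Y)
      - t • (LieAlgebra.ad ℝ L Y ∘ₗ LieAlgebra.ad ℝ L X) := by
  ext Z
  simp only [RtMap, LinearMap.coe_mk, AddHom.coe_mk, LinearMap.add_apply, LinearMap.sub_apply,
    LinearMap.smul_apply, LinearMap.comp_apply, LieAlgebra.ad_apply, LinearMap.neg_apply]
  rw [← lie_skew Z ⁅X, Y⁆, ← lie_skew Z Y, ← lie_skew Z X]
  simp only [lie_neg, neg_lie, smul_neg, neg_neg, neg_smul]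
  rw [← lie_skew ⁅X, Z⁆ Y]
  simp only [smul_neg, neg_smul, neg_neg]
  module

lemma RicT_formula (L : Type*) [LieRing L] [LieAlgebra ℝ L] [FiniteDimensional ℝ L]
    (t : ℝ) (X Y : L) :
    RicT L t X Y = (t ^ 2 - t) *
      LinearMap.trace ℝ L (LieAlgebra.ad ℝ L Y ∘ₗ LieAlgebra.ad ℝ L X) := by
  have had : LieAlgebra.ad ℝ L ⁅X, Y⁆ =
      LieAlgebra.ad ℝ L X ∘ₗ LieAlgebra.ad ℝ L Y
      - LieAlgebra.ad ℝ L Y ∘ₗ LieAlgebra.ad ℝ L X := by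
    ext Z
    simp only [LieAlgebra.ad_apply, LinearMap.sub_apply, LinearMap.comp_apply]
    rw [lie_lie]
  have hcomm : LinearMap.trace ℝ L (LieAlgebra.ad ℝ L X ∘ₗ LieAlgebra.ad ℝ L Y)
      = LinearMap.trace ℝ L (LieAlgebra.ad ℝ L Y ∘ₗ LieAlgebra.ad ℝ L X) :=
    LinearMap.trace_comp_comm' _ _
  rw [RicT, RtMap_eq, map_sub, map_add, map_smul, map_smul, map_smul, had, map_sub, hcomm]
  simp only [smul_eq_mul]
  ring

/-- `Ric_t = 4(t − t²)·Ric_{1/2}`; hence `∇^t` is Ricci-flat for `t = 0, 1`, and for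
`0 < t < 1` the proportionality factor `4(t − t²)` is positive. -/
theorem RicT_eq (L : Type*) [LieRing L] [LieAlgebra ℝ L] [FiniteDimensional ℝ L] :
    (∀ (t : ℝ) (X Y : L), RicT L t X Y = 4 * (t - t ^ 2) * RicT L (1 / 2) X Y) ∧
    (∀ X Y : L, RicT L 0 X Y = 0) ∧
    (∀ X Y : L, RicT L 1 X Y = 0) ∧
    (∀ t : ℝ, 0 < t → t < 1 → 0 < 4 * (t - t ^ 2)) := by
  refine ⟨fun t X Y => ?_, fun X Y => ?_, fun X Y => ?_, fun t ht ht1 => ?_⟩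
  · rw [RicT_formula, RicT_formula]; ring
  · rw [RicT_formula]; ring
  · rw [RicT_formula]; ring
  · nlinarith
end

section
/- For every natural number k ≥ 1 there exists exactly one real number t > 0 satisfying t⁵ − (1 − t)·(2kt + 2k + 1) = 0, and this solution satisfies 0 < t < 1. In particular t = 1 is never a solution. -/
/-- For every `k ≥ 1` there is exactly one `t > 0` with
`t⁵ − (1 − t)(2kt + 2k + 1) = 0`; this root lies in `(0,1)`, and in particular
`t = 1` is never a solution. -/
theorem tanno_root_exists_unique :
    ∀ k : ℕ, 1 ≤ k →
      (∃! t : ℝ, 0 < t ∧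
        t ^ 5 - (1 - t) * (2 * (k : ℝ) * t + 2 * (k : ℝ) + 1) = 0) ∧
      (∀ t : ℝ, 0 < t →
        t ^ 5 - (1 - t) * (2 * (k : ℝ) * t + 2 * (k : ℝ) + 1) = 0 → t < 1) ∧
      (1 : ℝ) ^ 5 - (1 - 1) * (2 * (k : ℝ) * 1 + 2 * (k : ℝ) + 1) ≠ 0 := by
  intro k hk
  set c : ℝ := (k : ℝ) with hc
  have hc1 : (1 : ℝ) ≤ c := by rw [hc]; exact_mod_cast hk
  set f : ℝ → ℝ := fun t => t ^ 5 + 2 * c * t ^ 2 + t - (2 * c + 1) with hf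
  have hfeq : ∀ t : ℝ, t ^ 5 - (1 - t) * (2 * c * t + 2 * c + 1) = f t := by
    intro t; simp only [hf]; ring
  -- strict monotonicity on nonnegatives
  have hmono : ∀ a b : ℝ, 0 ≤ a → a < b → f a < f b := by
    intro a b ha hab
    have hb : 0 ≤ b := le_of_lt (lt_of_le_of_lt ha hab)
    simp only [hf]
    have h5 : a ^ 5 ≤ b ^ 5 := pow_le_pow_left₀ ha hab.le 5
    have h2 : a ^ 2 ≤ b ^ 2 := pow_le_pow_left₀ ha hab.le 2
    have h2' : 2 * c * a ^ 2 ≤ 2 * c * b ^ 2 := by nlinarith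
    linarith
  have hf0 : f 0 < 0 := by simp only [hf]; nlinarith
  have hf1 : f 1 = 1 := by simp only [hf]; ring
  -- existence of root in [0,1]
  have hcont : ContinuousOn f (Set.Icc (0 : ℝ) 1) := by fun_prop
  have hiv := intermediate_value_Icc (by norm_num : (0:ℝ) ≤ 1) hcont
  have h0mem : (0 : ℝ) ∈ Set.Icc (f 0) (f 1) := by
    constructor
    · exact le_of_lt hf0
    · rw [hf1]; norm_num
  obtain ⟨t₀, ht₀mem, ht₀⟩ := hiv h0mem
  have ht₀pos : 0 < t₀ := by
    rcases lt_or_eq_of_le ht₀mem.1 with h | h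
    · exact h
    · exfalso; rw [← h] at ht₀; rw [ht₀] at hf0; exact lt_irrefl 0 hf0
  have hlt1 : ∀ t : ℝ, 0 < t → f t = 0 → t < 1 := by
    intro t ht htz
    by_contra h
    push_neg at h
    rcases lt_or_eq_of_le h with h' | h'
    · have := hmono 1 t (by norm_num) h'
      rw [hf1, htz] at this; linarith
    · rw [← h'] at htz; rw [htz] at hf1; norm_num at hf1
  refine ⟨⟨t₀, ⟨ht₀pos, by rw [hfeq]; exact ht₀⟩, ?_⟩, ?_, ?_⟩
  · rintro s ⟨hs, hsz⟩
    rw [hfeq] at hsz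
    rcases lt_trichotomy s t₀ with h | h | h
    · have := hmono s t₀ (le_of_lt hs) h
      rw [hsz, ht₀] at this; linarith
    · exact h
    · have := hmono t₀ s (le_of_lt ht₀pos) h
      rw [hsz, ht₀] at this; linarith
  · intro t ht htz
    rw [hfeq] at htz
    exact hlt1 t ht htz
  · rw [hfeq 1, hf1]; norm_num
end
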